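/- arXiv:2301.06973 — 5 statements merged into one kernel-verified Lean document; each statement's English description precedes it below -/
import Mathlib

section
/- Suppose the base measure μ has finite support {z_1,…,z_r} with μ({z_i}) = p_i > 0 and ∑ p_i = 1. Then almost surely the empirical measure ν_n of the critical points of P_n converges weakly to μ as n → ∞. -/
/-!
If `μ` is carried by the finite set `s`, the strong law of large numbers says that almost surely
each `z ∈ s` occurs `m_z(n) = (μ{z} + o(1)) n` times among `Z_0, …, Z_{n-1}`. A root of `P_n` of
multiplicity `m` is a root of `P_n'` of multiplicity at least `m - 1`, so `ν_n` puts mass at least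
`(m_z(n) - 1)/(n - 1) → μ{z}` on each `z ∈ s`. As these masses add up to `1` in the limit, the
remaining critical points, wherever they lie, carry a vanishing proportion of the mass.
-/

open MeasureTheory ProbabilityTheory Filter Polynomial
open scoped ENNReal Topology

noncomputable def empCritMeasure (ZZ : ℕ → ℂ) (n : ℕ) : Measure ℂ :=
  ((n : ℝ≥0∞) - 1)⁻¹ •
    ((Polynomial.derivative (∏ k ∈ Finset.range n, (X - Polynomial.C (ZZ k)))).roots.map
      Measure.dirac).sum

open Finset

theorem Multiset.abs_sum_map_le_card_mul {α : Type*} (m : Multiset α) {φ : α → ℝ} {C : ℝ}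
    (hφ : ∀ x, |φ x| ≤ C) : |(m.map φ).sum| ≤ card m * C :=
  calc |(m.map φ).sum| ≤ ((m.map φ).map abs).sum := abs_sum_le_sum_abs
    _ ≤ card ((m.map φ).map abs) • C := sum_le_card_nsmul _ _ (by simpa using fun x _ => hφ x)
    _ = card m * C := by simp

theorem Multiset.tendsto_sum_map_div_card_of_le_count {α : Type*} [DecidableEq α]
    {R : ℕ → Multiset α} {s : Finset α} {a : α → ℕ → ℕ} {p : α → ℝ}
    (hle : ∀ z ∈ s, ∀ n, a z n ≤ (R n).count z)
    (ha : ∀ z ∈ s, Tendsto (fun n => (a z n : ℝ) / card (R n)) atTop (𝓝 (p z)))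
    (hsum : ∑ z ∈ s, p z = 1) {φ : α → ℝ} {C : ℝ} (hφ : ∀ x, |φ x| ≤ C) :
    Tendsto (fun n => ((R n).map φ).sum / card (R n)) atTop (𝓝 (∑ z ∈ s, p z * φ z)) := by
  -- `B n` is the part of `R n` forced by the lower bounds `a`; what is left of `R n` has relative
  -- size at most `1 - ∑ z ∈ s, a z n / card (R n) → 0`.
  set B : ℕ → Multiset α := fun n => ∑ z ∈ s, replicate (a z n) z
  have hBR (n : ℕ) : B n ≤ R n := le_iff_count.2 fun x => by
    simp only [B, count_sum', count_replicate, Finset.sum_ite_eq']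
    split_ifs with hx
    · exact hle x hx n
    · exact Nat.zero_le _
  have hcardB (n : ℕ) : (card (B n) : ℝ) = ∑ z ∈ s, (a z n : ℝ) := by simp [B]
  have hsplit (n : ℕ) : ((R n).map φ).sum / card (R n) =
      ∑ z ∈ s, (a z n : ℝ) / card (R n) * φ z + ((R n - B n).map φ).sum / card (R n) := by
    have hmapB : ((B n).map φ).sum = ∑ z ∈ s, (a z n : ℝ) * φ z := by
      rw [← mapAddMonoidHom_apply, map_sum, ← coe_sumAddMonoidHom, map_sum]
      simp
    rw [← add_tsub_cancel_of_le (hBR n), map_add, sum_add, add_div, hmapB, Finset.sum_div,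
      add_tsub_cancel_of_le (hBR n)]
    simp_rw [mul_div_right_comm]
  have hrest_card : Tendsto (fun n => (card (R n - B n) : ℝ) / card (R n)) atTop (𝓝 0) := by
    have hupper : Tendsto (fun n => 1 - ∑ z ∈ s, (a z n : ℝ) / card (R n)) atTop (𝓝 0) := by
      simpa [hsum] using (tendsto_const_nhds (x := (1 : ℝ))).sub (tendsto_finsetSum s ha)
    refine squeeze_zero (fun n => by positivity) (fun n => ?_) hupper
    rw [card_sub (hBR n), Nat.cast_sub (card_le_card (hBR n)), hcardB, sub_div, ← Finset.sum_div]
    gcongr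
    exact div_self_le_one _
  have hrest : Tendsto (fun n => ((R n - B n).map φ).sum / card (R n)) atTop (𝓝 0) := by
    refine squeeze_zero_norm (fun n => ?_) (by simpa using hrest_card.mul_const C)
    rw [Real.norm_eq_abs, abs_div, Nat.abs_cast, div_mul_eq_mul_div]
    gcongr
    exact abs_sum_map_le_card_mul _ hφ
  simpa [hsplit] using (tendsto_finsetSum s fun z hz => (ha z hz).mul_const (φ z)).add hrest

theorem tendsto_natCast_sub_one_div {m : ℕ → ℕ} {p : ℝ}
    (h : Tendsto (fun n => (m n : ℝ) / n) atTop (𝓝 p)) :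
    Tendsto (fun n => ((m n - 1 : ℕ) : ℝ) / n) atTop (𝓝 p) := by
  have hlower : Tendsto (fun n => (m n : ℝ) / n - 1 / n) atTop (𝓝 p) := by
    simpa using h.sub tendsto_one_div_atTop_nhds_zero_nat
  refine tendsto_of_tendsto_of_tendsto_of_le_of_le hlower h (fun n => ?_) (fun n => ?_)
  · rw [← sub_div]
    gcongr
    rw [sub_le_iff_le_add]
    exact (Nat.cast_le.2 (by omega : m n ≤ m n - 1 + 1)).trans_eq (Nat.cast_succ _)
  · gcongr
    exact Nat.sub_le _ _

theorem tendsto_natCast_sub_one_div_natCast_sub_one {m : ℕ → ℕ} {p : ℝ}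
    (h : Tendsto (fun n => (m n : ℝ) / n) atTop (𝓝 p)) :
    Tendsto (fun n => ((m n - 1 : ℕ) : ℝ) / (n - 1 : ℕ)) atTop (𝓝 p) := by
  have hid : Tendsto (fun n => ((n - 1 : ℕ) : ℝ) / n) atTop (𝓝 1) :=
    tendsto_natCast_sub_one_div (m := id) <| tendsto_const_nhds.congr' <|
      (eventually_ne_atTop 0).mono fun n hn => (div_self (Nat.cast_ne_zero.2 hn)).symm
  have hquot := (tendsto_natCast_sub_one_div h).div hid one_ne_zero
  rw [div_one] at hquot
  refine hquot.congr' ?_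
  filter_upwards [eventually_ne_atTop 0] with n hn
  exact div_div_div_cancel_right₀ (Nat.cast_ne_zero.2 hn) _ _

section CriticalPoints

variable {K ι : Type*} [Field K] (t : Finset ι) (f : ι → K)

theorem roots_finsetProd_X_sub_C : (∏ i ∈ t, (X - C (f i))).roots = t.val.map f := by
  simpa [Multiset.map_map] using roots_multiset_prod_X_sub_C (t.val.map f)

theorem card_roots_derivative_finsetProd_X_sub_C [IsAlgClosed K] [CharZero K] :
    (derivative (∏ i ∈ t, (X - C (f i)))).roots.card = #t - 1 := by
  rw [IsAlgClosed.card_roots_eq_natDegree, natDegree_derivative,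
    natDegree_finsetProd_X_sub_C_eq_card]

theorem card_filter_sub_one_le_count_roots_derivative [CharZero K] [DecidableEq K] (z : K) :
    #{i ∈ t | f i = z} - 1 ≤ (derivative (∏ i ∈ t, (X - C (f i)))).roots.count z := by
  rw [count_roots]
  refine le_trans ?_ (rootMultiplicity_sub_one_le_derivative_rootMultiplicity _ z)
  rw [← count_roots, roots_finsetProd_X_sub_C, Multiset.count_map, Finset.card_def,
    Finset.filter_val]
  simp_rw [eq_comm]
  exact le_rfl

end CriticalPoints

section Integrals

variable {α E : Type*} [MeasurableSpace α] [MeasurableSingletonClass α] [NormedAddCommGroup E]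

theorem integrable_multiset_sum_dirac (m : Multiset α) (f : α → E) :
    Integrable f (m.map Measure.dirac).sum := by
  induction m using Multiset.induction_on with
  | empty => simp
  | cons a m ih => simpa using (integrable_dirac enorm_lt_top).add_measure ih

variable [NormedSpace ℝ E] [CompleteSpace E]

theorem integral_multiset_sum_dirac (m : Multiset α) (f : α → E) :
    ∫ x, f x ∂(m.map Measure.dirac).sum = (m.map f).sum := by
  induction m using Multiset.induction_on with
  | empty => simp
  | cons a m ih =>
    simp [integral_add_measure (integrable_dirac enorm_lt_top)
      (integrable_multiset_sum_dirac m f), ih]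

theorem integral_eq_sum_measureReal_singleton {μ : Measure α} {s : Finset α}
    (hs : ∀ᵐ x ∂μ, x ∈ s) {f : α → E} (hf : IntegrableOn f s μ) :
    ∫ x, f x ∂μ = ∑ x ∈ s, μ.real {x} • f x := by
  rw [← setIntegral_finset s hf, Measure.restrict_eq_self_of_ae_mem hs]

end Integrals

theorem integral_empCritMeasure (ZZ : ℕ → ℂ) (n : ℕ) (φ : ℂ → ℝ) :
    ∫ z, φ z ∂empCritMeasure ZZ n =
      ((derivative (∏ k ∈ range n, (X - C (ZZ k)))).roots.map φ).sum /
        (derivative (∏ k ∈ range n, (X - C (ZZ k)))).roots.card := by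
  rw [empCritMeasure, integral_smul_measure, integral_multiset_sum_dirac,
    card_roots_derivative_finsetProd_X_sub_C, card_range, ← Nat.cast_one, ← ENNReal.natCast_sub,
    ENNReal.toReal_inv, ENNReal.toReal_natCast, smul_eq_mul, inv_mul_eq_div]

theorem tendsto_integral_empCritMeasure {ZZ : ℕ → ℂ} {s : Finset ℂ} {p : ℂ → ℝ}
    (hfreq : ∀ z ∈ s, Tendsto (fun n => (#{k ∈ range n | ZZ k = z} : ℝ) / n) atTop (𝓝 (p z)))
    (hsum : ∑ z ∈ s, p z = 1) (φ : BoundedContinuousFunction ℂ ℝ) :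
    Tendsto (fun n => ∫ z, φ z ∂empCritMeasure ZZ n) atTop (𝓝 (∑ z ∈ s, p z * φ z)) := by
  simp_rw [integral_empCritMeasure]
  refine Multiset.tendsto_sum_map_div_card_of_le_count
    (a := fun z n => #{k ∈ range n | ZZ k = z} - 1)
    (fun z _ n => card_filter_sub_one_le_count_roots_derivative _ _ z) (fun z hz => ?_) hsum
    (fun x => (Real.norm_eq_abs _).symm.trans_le (φ.norm_coe_le_norm x))
  simp_rw [card_roots_derivative_finsetProd_X_sub_C, card_range]
  exact tendsto_natCast_sub_one_div_natCast_sub_one (hfreq z hz)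

theorem ae_tendsto_card_filter_mem_div {Ω α : Type*} [MeasurableSpace Ω] [MeasurableSpace α]
    {Pr : Measure Ω} {Z : ℕ → Ω → α} (hmeas : ∀ k, Measurable (Z k)) (hindep : iIndepFun Z Pr)
    {μ : Measure α} [IsFiniteMeasure μ] (hid : ∀ k, Measure.map (Z k) Pr = μ)
    {A : Set α} [DecidablePred (· ∈ A)] (hA : MeasurableSet A) :
    ∀ᵐ ω ∂Pr, Tendsto (fun n => (#{k ∈ range n | Z k ω ∈ A} : ℝ) / n) atTop (𝓝 (μ.real A)) := by
  set f : α → ℝ := A.indicator 1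
  have hf : Measurable f := measurable_one.indicator hA
  have hint : Integrable (fun ω => f (Z 0 ω)) Pr :=
    (integrable_map_measure hf.aestronglyMeasurable (hmeas 0).aemeasurable).1 <| by
      rw [hid 0]; exact (integrable_const 1).indicator hA
  have hmean : ∫ ω, f (Z 0 ω) ∂Pr = μ.real A := by
    rw [← integral_map (hmeas 0).aemeasurable hf.aestronglyMeasurable, hid 0]
    exact integral_indicator_one hA
  have hident (k : ℕ) : IdentDistrib (fun ω => f (Z k ω)) (fun ω => f (Z 0 ω)) Pr Pr :=
    (IdentDistrib.mk (hmeas k).aemeasurable (hmeas 0).aemeasurable (by rw [hid, hid])).comp hf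
  filter_upwards [strong_law_ae_real (fun k ω => f (Z k ω)) hint
    (fun i j hij => (hindep.indepFun hij).comp hf hf) hident] with ω hω
  rw [hmean] at hω
  refine hω.congr fun n => ?_
  rw [natCast_card_filter]
  simp [f, Set.indicator_apply]

theorem as_convergence_of_critical_points_finite_support_general
    {Ω : Type*} [MeasurableSpace Ω] (Pr : Measure Ω)
    (Z : ℕ → Ω → ℂ) (hmeas : ∀ k, Measurable (Z k))
    (hindep : iIndepFun Z Pr)
    (μ : Measure ℂ) [IsProbabilityMeasure μ]
    (hid : ∀ k, Measure.map (Z k) Pr = μ)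
    (s : Finset ℂ) (hs_full : μ (s : Set ℂ) = 1) :
    ∀ᵐ ω ∂Pr, ∀ φ : BoundedContinuousFunction ℂ ℝ,
      Tendsto (fun n => ∫ z, φ z ∂(empCritMeasure (fun k => Z k ω) n)) atTop
        (nhds (∫ z, φ z ∂μ)) := by
  have hs_ae : ∀ᵐ z ∂μ, z ∈ s := (mem_ae_iff_prob_eq_one s.measurableSet).2 hs_full
  have hsum : ∑ z ∈ s, μ.real {z} = 1 := by
    rw [sum_measureReal_singleton, measureReal_def, hs_full, ENNReal.toReal_one]
  have hfreq : ∀ᵐ ω ∂Pr, ∀ z ∈ s, Tendsto (fun n => (#{k ∈ range n | Z k ω = z} : ℝ) / n)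
      atTop (𝓝 (μ.real {z})) := (ae_ball_iff s.countable_toSet).2 fun z _ => by
    simpa using ae_tendsto_card_filter_mem_div hmeas hindep hid (measurableSet_singleton z)
  filter_upwards [hfreq] with ω hω φ
  rw [integral_eq_sum_measureReal_singleton hs_ae (φ.integrable μ).integrableOn]
  exact tendsto_integral_empCritMeasure hω hsum φ

/-- If the base measure `μ` has finite support `{z_1, …, z_r}`, with `μ({z_i}) = p_i > 0` and
`∑ p_i = 1`, then almost surely the empirical measure of the critical points of
`P_n(X) = ∏_{k=1}^n (X - Z_k)`, whose roots are i.i.d. with law `μ`,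
converges weakly to `μ`. -/
theorem as_convergence_of_critical_points_finite_support
    {Ω : Type*} [MeasurableSpace Ω] (Pr : Measure Ω) [IsProbabilityMeasure Pr]
    (Z : ℕ → Ω → ℂ) (hmeas : ∀ k, Measurable (Z k))
    (hindep : iIndepFun Z Pr)
    (μ : Measure ℂ) [IsProbabilityMeasure μ]
    (hid : ∀ k, Measure.map (Z k) Pr = μ)
    (s : Finset ℂ) (hs_pos : ∀ z ∈ s, 0 < μ {z}) (hs_full : μ (s : Set ℂ) = 1) :
    ∀ᵐ ω ∂Pr, ∀ φ : BoundedContinuousFunction ℂ ℝ,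
      Tendsto (fun n => ∫ z, φ z ∂(empCritMeasure (fun k => Z k ω) n)) atTop
        (nhds (∫ z, φ z ∂μ)) :=
  as_convergence_of_critical_points_finite_support_general Pr Z hmeas hindep μ hid s hs_full
end

section
/- Let X be a non-degenerate random vector in ℝ^d (no integrability assumed). Then there exist constants δ > 0 and κ > 0 such that for all t ∈ ℝ^d with ‖t‖ ≤ δ, one has |E[e^{i t·X}]| ≤ 1 − κ‖t‖² ≤ e^{−(κ/2)‖t‖²}. -/
/-!
Symmetrize: if `X'` is an independent copy of `X`, then `|E e^{i t·X}|² = E cos (t·(X - X'))`, and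
non-degeneracy of `X` says that no `c ≠ 0` has `c·(X - X') = 0` almost surely. Hence
`q(c) = E min((c·(X - X'))², 1)` is positive and, being continuous, bounded below by some `λ > 0`
on the unit sphere. Choose `R` with `P(‖X - X'‖ > R) ≤ λ / 2`; on `‖X - X'‖ ≤ R` and for
`‖t‖ ≤ π / R` the bound `1 - cos x ≥ 2x²/π²` (valid for `|x| ≤ π`) gives
`1 - |E e^{i t·X}|² ≥ λ‖t‖²/π²`, and `√(1 - a) ≤ 1 - a/2` finishes.
-/

open MeasureTheory Filter Real
open scoped RealInnerProductSpace ComplexConjugate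

lemma le_one_sub_half_of_sq_le_one_sub {x a : ℝ} (h : x ^ 2 ≤ 1 - a) : x ≤ 1 - a / 2 := by
  have ha : a ≤ 1 := by nlinarith
  refine le_of_sq_le_sq ?_ (by linarith)
  nlinarith [sq_nonneg a]

lemma one_sub_mul_le_exp_neg_half_mul {κ r : ℝ} (hκ : 0 ≤ κ) (hr : 0 ≤ r) :
    1 - κ * r ≤ exp (-(κ / 2) * r) := by
  nlinarith [add_one_le_exp (-(κ / 2) * r), mul_nonneg hκ hr]

lemma exists_measureReal_norm_gt_le {E : Type*} [NormedAddCommGroup E] [CompleteSpace E]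
    [SecondCountableTopology E] [MeasurableSpace E] [BorelSpace E] (μ : Measure E)
    [IsFiniteMeasure μ] {ε : ℝ} (hε : 0 < ε) : ∃ R, 0 < R ∧ μ.real {z | R < ‖z‖} ≤ ε := by
  have h := tendsto_measure_norm_gt_of_isTightMeasureSet (isTightMeasureSet_singleton (μ := μ))
  simp only [Set.mem_singleton_iff, iSup_iSup_eq_left] at h
  obtain ⟨R, hle, hR⟩ := ((h.eventually_lt_const (ENNReal.ofReal_pos.2 hε)).and
    (eventually_gt_atTop 0)).exists
  exact ⟨R, hR, ENNReal.toReal_le_of_le_ofReal hε.le hle.le⟩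

section

variable {E : Type*} [NormedAddCommGroup E] [InnerProductSpace ℝ E]

lemma two_div_pi_sq_mul_le_one_sub_cos {c z : E} {s R : ℝ} (hc : ‖c‖ = 1) (hs : 0 ≤ s)
    (hsR : s * R ≤ π) :
    2 / π ^ 2 * s ^ 2 * (min (⟪z, c⟫ ^ 2) 1 - {x : E | R < ‖x‖}.indicator 1 z) ≤
      1 - cos (s * ⟪z, c⟫) := by
  by_cases hz : R < ‖z‖
  · have : min (⟪z, c⟫ ^ 2) 1 - {x : E | R < ‖x‖}.indicator 1 z ≤ 0 := by
      simp [Set.indicator_of_mem (show z ∈ {x : E | R < ‖x‖} from hz)]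
    nlinarith [cos_le_one (s * ⟪z, c⟫), show 0 ≤ 2 / π ^ 2 * s ^ 2 by positivity]
  · have hinner : |s * ⟪z, c⟫| ≤ π := by
      calc |s * ⟪z, c⟫| ≤ s * ‖z‖ := by
            rw [abs_mul, abs_of_nonneg hs]
            exact mul_le_mul_of_nonneg_left ((abs_real_inner_le_norm z c).trans (by simp [hc])) hs
        _ ≤ s * R := mul_le_mul_of_nonneg_left (not_lt.1 hz) hs
        _ ≤ π := hsR
    rw [Set.indicator_of_notMem (show z ∉ {x : E | R < ‖x‖} from hz), sub_zero]
    calc 2 / π ^ 2 * s ^ 2 * min (⟪z, c⟫ ^ 2) 1 ≤ 2 / π ^ 2 * (s * ⟪z, c⟫) ^ 2 := by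
          rw [mul_pow, ← mul_assoc]; gcongr; exact min_le_left _ _
      _ ≤ 1 - cos (s * ⟪z, c⟫) := by linarith [cos_le_one_sub_mul_cos_sq hinner]

variable [MeasurableSpace E] [BorelSpace E] {μ : Measure E}

lemma integrable_cos_inner [IsFiniteMeasure μ] (t : E) : Integrable (fun z ↦ cos ⟪z, t⟫) μ :=
  (integrable_const 1).mono' (by fun_prop) (ae_of_all _ fun _ ↦ abs_cos_le_one _)

lemma integrable_min_inner_sq [IsFiniteMeasure μ] (c : E) :
    Integrable (fun z ↦ min (⟪z, c⟫ ^ 2) 1) μ :=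
  (integrable_const 1).mono' (by fun_prop)
    (ae_of_all _ fun z ↦ by rw [Real.norm_of_nonneg (by positivity)]; exact min_le_right _ _)

lemma continuous_integral_min_inner_sq [IsFiniteMeasure μ] :
    Continuous fun c : E ↦ ∫ z, min (⟪z, c⟫ ^ 2) 1 ∂μ := by
  refine continuous_of_dominated (bound := fun _ ↦ 1) (fun c ↦ by fun_prop)
    (fun c ↦ ae_of_all _ fun z ↦ ?_) (integrable_const 1) (ae_of_all _ fun z ↦ by fun_prop)
  rw [Real.norm_of_nonneg (by positivity)]
  exact min_le_right _ _

lemma integral_min_inner_sq_pos [IsFiniteMeasure μ]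
    (hμ : ∀ c, (∀ᵐ z ∂μ, ⟪z, c⟫ = 0) → c = 0) {c : E} (hc : c ≠ 0) :
    0 < ∫ z, min (⟪z, c⟫ ^ 2) 1 ∂μ := by
  refine (integral_nonneg fun z ↦ by positivity).lt_of_ne' fun h ↦ hc (hμ c ?_)
  filter_upwards [(integral_eq_zero_iff_of_nonneg (fun z ↦ by positivity)
    (integrable_min_inner_sq c)).1 h] with z hz
  simp only [Pi.zero_apply, min_eq_iff, one_ne_zero, false_and, or_false, sq_eq_zero_iff] at hz
  exact hz.1

lemma exists_pos_le_integral_min_inner_sq [FiniteDimensional ℝ E] [IsFiniteMeasure μ]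
    (hμ : ∀ c, (∀ᵐ z ∂μ, ⟪z, c⟫ = 0) → c = 0) :
    ∃ l, 0 < l ∧ ∀ c : E, ‖c‖ = 1 → l ≤ ∫ z, min (⟪z, c⟫ ^ 2) 1 ∂μ := by
  obtain ⟨l, hl, hle⟩ := (isCompact_sphere (0 : E) 1).exists_forall_le'
    continuous_integral_min_inner_sq.continuousOn fun c hc ↦
      integral_min_inner_sq_pos hμ (ne_zero_of_mem_unit_sphere ⟨c, hc⟩)
  exact ⟨l, hl, fun c hc ↦ hle c (by simpa using hc)⟩

lemma exists_mul_sq_norm_le_integral_one_sub_cos [FiniteDimensional ℝ E] [IsFiniteMeasure μ]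
    (hμ : ∀ c, (∀ᵐ z ∂μ, ⟪z, c⟫ = 0) → c = 0) :
    ∃ δ, 0 < δ ∧ ∃ κ, 0 < κ ∧ ∀ t : E, ‖t‖ ≤ δ → κ * ‖t‖ ^ 2 ≤ ∫ z, (1 - cos ⟪z, t⟫) ∂μ := by
  obtain ⟨l, hl, hlle⟩ := exists_pos_le_integral_min_inner_sq hμ
  obtain ⟨R, hR, htail⟩ := exists_measureReal_norm_gt_le μ (half_pos hl)
  refine ⟨π / R, by positivity, l / π ^ 2, by positivity, fun t ht ↦ ?_⟩
  rcases eq_or_ne t 0 with rfl | ht0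
  · simp
  set c := ‖t‖⁻¹ • t
  have hc : ‖c‖ = 1 := norm_smul_inv_norm ht0
  have htc : ∀ z, ⟪z, t⟫ = ‖t‖ * ⟪z, c⟫ := fun z ↦ by
    rw [inner_smul_right, ← mul_assoc, mul_inv_cancel₀ (norm_ne_zero_iff.2 ht0), one_mul]
  have hsR : ‖t‖ * R ≤ π := (le_div_iff₀ hR).1 ht
  have hset : MeasurableSet {x : E | R < ‖x‖} := measurableSet_lt measurable_const measurable_norm
  have hind : Integrable ({x : E | R < ‖x‖}.indicator (1 : E → ℝ)) μ :=
    (integrable_const 1).indicator hset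
  calc l / π ^ 2 * ‖t‖ ^ 2
      ≤ 2 / π ^ 2 * ‖t‖ ^ 2 * (∫ z, min (⟪z, c⟫ ^ 2) 1 ∂μ - μ.real {x : E | R < ‖x‖}) := by
        rw [show l / π ^ 2 * ‖t‖ ^ 2 = 2 / π ^ 2 * ‖t‖ ^ 2 * (l - l / 2) by ring]
        gcongr
        exact hlle c hc
    _ = ∫ z, 2 / π ^ 2 * ‖t‖ ^ 2 *
          (min (⟪z, c⟫ ^ 2) 1 - {x : E | R < ‖x‖}.indicator 1 z) ∂μ := by
        rw [integral_const_mul, integral_sub (integrable_min_inner_sq c) hind,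
          integral_indicator_one hset]
    _ ≤ ∫ z, (1 - cos ⟪z, t⟫) ∂μ := by
        refine integral_mono (((integrable_min_inner_sq c).sub hind).const_mul _)
          ((integrable_const 1).sub (integrable_cos_inner t)) fun z ↦ ?_
        rw [htc]
        exact two_div_pi_sq_mul_le_one_sub_cos hc (norm_nonneg t) hsR

lemma re_charFun_eq_one_sub_integral [IsProbabilityMeasure μ] (t : E) :
    (charFun μ t).re = 1 - ∫ z, (1 - cos ⟪z, t⟫) ∂μ := by
  have hint : Integrable (fun z ↦ Complex.exp (⟪z, t⟫ * Complex.I)) μ :=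
    (integrable_const (1 : ℝ)).mono' (by fun_prop) (ae_of_all _ fun z ↦ by
      simp [Complex.norm_exp_ofReal_mul_I])
  rw [integral_sub (integrable_const 1) (integrable_cos_inner t), charFun_apply,
    ← Complex.reCLM_apply, ← ContinuousLinearMap.integral_comp_comm _ hint]
  simp [Complex.exp_ofReal_mul_I_re]

instance [IsFiniteMeasure μ] : IsFiniteMeasure μ.neg := μ.isFiniteMeasure_map _

instance [IsProbabilityMeasure μ] : IsProbabilityMeasure μ.neg :=
  Measure.isProbabilityMeasure_map measurable_neg.aemeasurable

lemma charFun_neg_measure (t : E) : charFun μ.neg t = conj (charFun μ t) := by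
  rw [← charFun_neg, Measure.neg_def, charFun_apply, charFun_apply,
    integral_map measurable_neg.aemeasurable (by fun_prop)]
  simp [inner_neg_left, inner_neg_right]

lemma charFun_conv_neg [SecondCountableTopology E] [IsFiniteMeasure μ] (t : E) :
    charFun (μ ∗ μ.neg) t = ((‖charFun μ t‖ ^ 2 : ℝ) : ℂ) := by
  rw [charFun_conv, charFun_neg_measure, Complex.mul_conj, Complex.normSq_eq_norm_sq]

lemma eq_zero_of_ae_inner_conv_neg_eq_zero [SecondCountableTopology E] [IsProbabilityMeasure μ]
    (hμ : ∀ c b, (∀ᵐ x ∂μ, ⟪x, c⟫ = b) → c = 0) {c : E}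
    (hc : ∀ᵐ z ∂(μ ∗ μ.neg), ⟪z, c⟫ = 0) : c = 0 := by
  rw [Measure.conv, ae_map_iff (by fun_prop) (measurableSet_eq_fun (by fun_prop) (by fun_prop)),
    Measure.neg_def] at hc
  obtain ⟨x, hx⟩ := (Measure.ae_ae_of_ae_prod hc).exists
  rw [ae_map_iff measurable_neg.aemeasurable
    (measurableSet_eq_fun (by fun_prop) (by fun_prop))] at hx
  refine hμ c ⟪x, c⟫ ?_
  filter_upwards [hx] with y hy
  rw [inner_add_left, inner_neg_left] at hy
  linarith

lemma exists_norm_charFun_le [FiniteDimensional ℝ E] [IsProbabilityMeasure μ]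
    (hμ : ∀ c b, (∀ᵐ x ∂μ, ⟪x, c⟫ = b) → c = 0) :
    ∃ δ, 0 < δ ∧ ∃ κ, 0 < κ ∧ ∀ t : E, ‖t‖ ≤ δ → ‖charFun μ t‖ ≤ 1 - κ * ‖t‖ ^ 2 := by
  obtain ⟨δ, hδ, κ, hκ, hle⟩ := exists_mul_sq_norm_le_integral_one_sub_cos (μ := μ ∗ μ.neg)
    fun c ↦ eq_zero_of_ae_inner_conv_neg_eq_zero hμ
  refine ⟨δ, hδ, κ / 2, half_pos hκ, fun t ht ↦ ?_⟩
  have hsq : ‖charFun μ t‖ ^ 2 = 1 - ∫ z, (1 - cos ⟪z, t⟫) ∂(μ ∗ μ.neg) := by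
    rw [← re_charFun_eq_one_sub_integral, charFun_conv_neg, Complex.ofReal_re]
  have := le_one_sub_half_of_sq_le_one_sub (hsq.trans_le (sub_le_sub_left (hle t ht) 1))
  linarith

end

/-- **Characteristic function bound for non-degenerate random vectors.**
If `X` is a non-degenerate random vector in `ℝ^d` (no integrability assumed), then there exist
`δ > 0` and `κ > 0` such that for all `t` with `‖t‖ ≤ δ`,
`|E[e^{i t·X}]| ≤ 1 − κ‖t‖² ≤ e^{−(κ/2)‖t‖²}`. -/
theorem charFun_bound_nondegenerate
    {Ω : Type*} [MeasurableSpace Ω] (Pr : Measure Ω) [IsProbabilityMeasure Pr]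
    (d : ℕ) (X : Ω → EuclideanSpace ℝ (Fin d)) (hX : Measurable X)
    (hnondeg : ∀ (c : Fin d → ℝ) (b : ℝ),
      (∀ᵐ ω ∂Pr, ∑ i, c i * X ω i = b) → c = 0) :
    ∃ δ : ℝ, 0 < δ ∧ ∃ κ : ℝ, 0 < κ ∧ ∀ t : EuclideanSpace ℝ (Fin d), ‖t‖ ≤ δ →
      ‖∫ ω, Complex.exp (Complex.I * ((∑ i, t i * X ω i : ℝ) : ℂ)) ∂Pr‖
          ≤ 1 - κ * ‖t‖ ^ 2 ∧
        1 - κ * ‖t‖ ^ 2 ≤ Real.exp (-(κ / 2) * ‖t‖ ^ 2) := by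
  have := Measure.isProbabilityMeasure_map (μ := Pr) hX.aemeasurable
  have hinner : ∀ x t : EuclideanSpace ℝ (Fin d), ⟪x, t⟫ = ∑ i, t i * x i := fun x t ↦ by
    simp [PiLp.inner_apply]
  have hlaw : ∀ c b, (∀ᵐ x ∂Pr.map X, ⟪x, c⟫ = b) → c = 0 := fun c b h ↦ by
    rw [ae_map_iff hX.aemeasurable (measurableSet_eq_fun (by fun_prop) (by fun_prop))] at h
    simpa using hnondeg c.ofLp b (by simpa [hinner, mul_comm] using h)
  have hcharFun : ∀ t, ∫ ω, Complex.exp (Complex.I * ((∑ i, t i * X ω i : ℝ) : ℂ)) ∂Pr =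
      charFun (Pr.map X) t := fun t ↦ by
    rw [charFun_apply, integral_map hX.aemeasurable (by fun_prop)]
    simp [hinner, mul_comm]
  obtain ⟨δ, hδ, κ, hκ, hle⟩ := exists_norm_charFun_le hlaw
  exact ⟨δ, hδ, κ, hκ, fun t ht ↦ ⟨hcharFun t ▸ hle t ht,
    one_sub_mul_le_exp_neg_half_mul hκ.le (sq_nonneg _)⟩⟩
end

section
/- Let (Z_k)_{k≥1} be i.i.d. complex random variables and fix r > 0 such that E[ |r − |Z_1||^{−1/2} ] < +∞. Then almost surely, sup_{z ∈ C(0,r)} |S_n(z)| = O(n³) as n → ∞, where S_n(z) = ∑_{k=1}^n 1/(z − Z_k); in particular log^+ ‖S_n‖_{C(0,r)} = O(log n). -/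
open MeasureTheory ProbabilityTheory Filter
open scoped ENNReal

/-- The modulus of the logarithmic derivative `S_n(z) = ∑_{k<n} 1/(z - ZZ k)` of
`P_n(X) = ∏_{k<n} (X - ZZ k)`, with the convention that `|S_n(z)| = +∞` if `z` is a pole
of `S_n`, i.e. if `z` is one of the points `ZZ k`, `k < n`. -/
noncomputable def logDerivAbs (ZZ : ℕ → ℂ) (n : ℕ) (z : ℂ) : ℝ≥0∞ :=
  if ∃ k < n, ZZ k = z then ⊤ else (‖∑ k ∈ Finset.range n, (z - ZZ k)⁻¹‖₊ : ℝ≥0∞)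

/-!
For `‖z‖ = r` each term of `S_n(z)` satisfies `|z - Z_k|⁻¹ ≤ |r - |Z_k||⁻¹ = X_k²` with
`X_k = |r - |Z_k||^{-1/2}`, so `|S_n(z)| ≤ ∑_{k<n} X_k² ≤ (∑_{k<n} X_k)²`.
The moment assumption says exactly that `X_1` is integrable, so by the strong law of large
numbers `∑_{k<n} X_k = O(n)` almost surely, whence `‖S_n‖_{C(0,r)} = O(n²)`. The same
assumption forces `|Z_k| ≠ r` almost surely, so no pole ever lies on the circle.
-/

open Finset

noncomputable def invSqrtDistSphere {E : Type*} [NormedAddCommGroup E] (r : ℝ) (z : E) : ℝ :=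
  |r - ‖z‖| ^ (-(2⁻¹ : ℝ))

section invSqrtDistSphere

variable {E : Type*} [NormedAddCommGroup E] (r : ℝ)

lemma invSqrtDistSphere_nonneg (z : E) : 0 ≤ invSqrtDistSphere r z :=
  Real.rpow_nonneg (abs_nonneg _) _

lemma invSqrtDistSphere_sq (z : E) : invSqrtDistSphere r z ^ 2 = |r - ‖z‖|⁻¹ := by
  rw [invSqrtDistSphere, ← Real.rpow_natCast, ← Real.rpow_mul (abs_nonneg _)]
  norm_num [Real.rpow_neg_one]

lemma measurable_invSqrtDistSphere [MeasurableSpace E] [OpensMeasurableSpace E] :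
    Measurable (invSqrtDistSphere (E := E) r) :=
  ((measurable_const.sub measurable_norm).abs).pow_const _

lemma ofReal_invSqrtDistSphere_le (z : E) :
    ENNReal.ofReal (invSqrtDistSphere r z) ≤ ENNReal.ofReal |r - ‖z‖| ^ (-(2⁻¹ : ℝ)) := by
  rcases (abs_nonneg (r - ‖z‖)).eq_or_lt with h | h
  · rw [← h, ENNReal.ofReal_zero, ENNReal.zero_rpow_of_neg (by norm_num)]
    exact le_top
  · exact (ENNReal.ofReal_rpow_of_pos h).ge

lemma integrable_invSqrtDistSphere_comp {Ω : Type*} [MeasurableSpace Ω] {μ : Measure Ω}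
    [MeasurableSpace E] [OpensMeasurableSpace E] {Y : Ω → E} (hY : Measurable Y)
    (hmom : ∫⁻ ω, ENNReal.ofReal |r - ‖Y ω‖| ^ (-(2⁻¹ : ℝ)) ∂μ < ⊤) :
    Integrable (fun ω => invSqrtDistSphere r (Y ω)) μ := by
  refine ⟨((measurable_invSqrtDistSphere r).comp hY).aestronglyMeasurable, ?_⟩
  rw [hasFiniteIntegral_iff_ofReal (Eventually.of_forall fun _ => invSqrtDistSphere_nonneg r _)]
  exact (lintegral_mono fun ω => ofReal_invSqrtDistSphere_le r (Y ω)).trans_lt hmom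

end invSqrtDistSphere

lemma norm_inv_sub_le_invSqrtDistSphere_sq {𝕜 : Type*} [NormedDivisionRing 𝕜] {r : ℝ}
    {z a : 𝕜} (hz : ‖z‖ = r) (ha : ‖a‖ ≠ r) :
    ‖(z - a)⁻¹‖ ≤ invSqrtDistSphere r a ^ 2 := by
  rw [norm_inv, invSqrtDistSphere_sq]
  refine inv_anti₀ (abs_pos.2 (sub_ne_zero.2 ha.symm)) ?_
  simpa [hz] using abs_norm_sub_norm_le z a

lemma iSup_logDerivAbs_sphere_le {a : ℕ → ℂ} {r : ℝ} {n : ℕ} (ha : ∀ k < n, ‖a k‖ ≠ r) :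
    ⨆ z ∈ Metric.sphere (0 : ℂ) r, logDerivAbs a n z ≤
      ENNReal.ofReal ((∑ k ∈ range n, invSqrtDistSphere r (a k)) ^ 2) := by
  refine iSup₂_le fun z hz => ?_
  have hzr : ‖z‖ = r := mem_sphere_zero_iff_norm.1 hz
  have hnopole : ¬ ∃ k < n, a k = z := fun ⟨k, hk, hakz⟩ => ha k hk (hakz ▸ hzr)
  rw [logDerivAbs, if_neg hnopole, ← ENNReal.ofReal_coe_nnreal, coe_nnnorm]
  refine ENNReal.ofReal_le_ofReal ?_
  calc ‖∑ k ∈ range n, (z - a k)⁻¹‖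
      ≤ ∑ k ∈ range n, invSqrtDistSphere r (a k) ^ 2 :=
        (norm_sum_le _ _).trans <| sum_le_sum fun k hk =>
          norm_inv_sub_le_invSqrtDistSphere_sq hzr (ha k (mem_range.1 hk))
    _ ≤ (∑ k ∈ range n, invSqrtDistSphere r (a k)) ^ 2 :=
        sum_sq_le_sq_sum_of_nonneg fun k _ => invSqrtDistSphere_nonneg r _

section Probability

variable {Ω : Type*} [MeasurableSpace Ω] {μ : Measure Ω}

lemma measure_eq_zero_of_lintegral_abs_sub_rpow_lt_top {f : Ω → ℝ} (hf : Measurable f)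
    {r p : ℝ} (hp : p < 0) (h : ∫⁻ ω, ENNReal.ofReal |r - f ω| ^ p ∂μ < ⊤) :
    μ {ω | f ω = r} = 0 := by
  have hfin := ae_lt_top (by fun_prop) h.ne
  rw [ae_iff] at hfin
  refine measure_mono_null (fun ω (hω : f ω = r) => ?_) hfin
  simp [hω, hp]

lemma ae_forall_notMem_of_identDistrib {E : Type*} [MeasurableSpace E] {Z : ℕ → Ω → E}
    (hident : ∀ k, IdentDistrib (Z k) (Z 0) μ μ) {s : Set E} (hs : MeasurableSet s)
    (h0 : μ (Z 0 ⁻¹' s) = 0) :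
    ∀ᵐ ω ∂μ, ∀ k, Z k ω ∉ s := by
  refine ae_all_iff.2 fun k => measure_eq_zero_iff_ae_notMem.1 ?_
  rw [← h0]
  exact (hident k).measure_mem_eq hs

lemma ae_exists_sum_range_le_mul {X : ℕ → Ω → ℝ} (hint : Integrable (X 0) μ)
    (hindep : Pairwise (Function.onFun (· ⟂ᵢ[μ] ·) X)) (hident : ∀ i, IdentDistrib (X i) (X 0) μ μ) :
    ∀ᵐ ω ∂μ, ∃ C : ℝ, 1 ≤ C ∧ ∀ n : ℕ, ∑ i ∈ range n, X i ω ≤ C * n := by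
  filter_upwards [strong_law_ae X hint hindep hident] with ω hω
  obtain ⟨B, hB⟩ := hω.bddAbove_range
  refine ⟨max B 1, le_max_right _ _, fun n => ?_⟩
  rcases n.eq_zero_or_pos with rfl | hn
  · simp
  have hmean := (hB (Set.mem_range_self n)).trans (le_max_left B 1)
  rwa [smul_eq_mul, inv_mul_le_iff₀ (by positivity), mul_comm] at hmean

end Probability

lemma max_log_le_mul_log_of_le_mul_pow {t C x : ℝ} (p : ℕ) (ht : 0 ≤ t) (hC : 1 ≤ C)
    (hx : 2 ≤ x) (htC : t ≤ C * x ^ p) :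
    max (Real.log t) 0 ≤ (Real.log C / Real.log 2 + p) * Real.log x := by
  have hlog2 : 0 < Real.log 2 := Real.log_pos (by norm_num)
  have hlogx : Real.log 2 ≤ Real.log x := Real.log_le_log (by norm_num) hx
  have hbound_nonneg : 0 ≤ Real.log (C * x ^ p) :=
    Real.log_nonneg (one_le_mul_of_one_le_of_one_le hC (one_le_pow₀ (by linarith)))
  have hbound : Real.log (C * x ^ p) ≤ (Real.log C / Real.log 2 + p) * Real.log x := by
    rw [Real.log_mul (by positivity) (by positivity), Real.log_pow, add_mul]
    gcongr
    rw [div_mul_eq_mul_div, le_div_iff₀ hlog2]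
    exact mul_le_mul_of_nonneg_left hlogx (Real.log_nonneg hC)
  have hlogt : Real.log t ≤ Real.log (C * x ^ p) := by
    rcases ht.eq_or_lt with rfl | ht
    · simpa using hbound_nonneg
    · exact Real.log_le_log ht htC
  exact max_le (hlogt.trans hbound) (hbound_nonneg.trans hbound)

lemma exists_max_log_le_mul_log_of_le_ofReal_mul_pow {s : ℕ → ℝ≥0∞} {C : ℝ} (p : ℕ)
    (hC : 1 ≤ C) (hs : ∀ n : ℕ, 1 ≤ n → s n ≤ ENNReal.ofReal (C * (n : ℝ) ^ p)) :
    ∃ K : ℝ, ∀ n : ℕ, 2 ≤ n →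
      s n ≠ ⊤ ∧ max (Real.log (s n).toReal) 0 ≤ K * Real.log n := by
  refine ⟨Real.log C / Real.log 2 + p, fun n hn => ⟨ne_top_of_le_ne_top ENNReal.ofReal_ne_top (hs n (by omega)), ?_⟩⟩
  refine max_log_le_mul_log_of_le_mul_pow p ENNReal.toReal_nonneg hC (by exact_mod_cast hn) ?_
  exact ENNReal.toReal_le_of_le_ofReal (by positivity) (hs n (by omega))

theorem as_cubic_bound_on_circle_general
    {Ω : Type*} [MeasurableSpace Ω] (Pr : Measure Ω)
    (Z : ℕ → Ω → ℂ) (hmeas : ∀ k, Measurable (Z k))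
    (hindep : iIndepFun Z Pr)
    (hident : ∀ k, Measure.map (Z k) Pr = Measure.map (Z 0) Pr)
    (r : ℝ)
    (hmom : ∫⁻ ω, (ENNReal.ofReal |r - ‖Z 0 ω‖|) ^ (-(2⁻¹ : ℝ)) ∂Pr < ⊤) :
    ∀ᵐ ω ∂Pr,
      (∃ C : ℝ, ∀ n : ℕ, 1 ≤ n →
        (⨆ z ∈ Metric.sphere (0 : ℂ) r, logDerivAbs (fun k => Z k ω) n z) ≤
          ENNReal.ofReal (C * (n : ℝ) ^ 3)) ∧
      (∃ K : ℝ, ∀ n : ℕ, 2 ≤ n →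
        (⨆ z ∈ Metric.sphere (0 : ℂ) r, logDerivAbs (fun k => Z k ω) n z) ≠ ⊤ ∧
        max (Real.log ((⨆ z ∈ Metric.sphere (0 : ℂ) r,
            logDerivAbs (fun k => Z k ω) n z).toReal)) 0 ≤ K * Real.log n) := by
  have hZident : ∀ k, IdentDistrib (Z k) (Z 0) Pr Pr :=
    fun k => ⟨(hmeas k).aemeasurable, (hmeas 0).aemeasurable, hident k⟩
  have hw := measurable_invSqrtDistSphere (E := ℂ) r
  set X : ℕ → Ω → ℝ := fun k => invSqrtDistSphere r ∘ Z k
  have hXident : ∀ k, IdentDistrib (X k) (X 0) Pr Pr := fun k => (hZident k).comp hw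
  have hXindep : Pairwise (Function.onFun (· ⟂ᵢ[Pr] ·) X) :=
    fun i j hij => (hindep.indepFun hij).comp hw hw
  have hsphere : Pr (Z 0 ⁻¹' {z | ‖z‖ = r}) = 0 :=
    measure_eq_zero_of_lintegral_abs_sub_rpow_lt_top (hmeas 0).norm (by norm_num) hmom
  filter_upwards [ae_exists_sum_range_le_mul (integrable_invSqrtDistSphere_comp r (hmeas 0) hmom)
      hXindep hXident, ae_forall_notMem_of_identDistrib hZident
      (measurableSet_eq_fun measurable_norm measurable_const) hsphere]
    with ω ⟨C, hC, hsum⟩ hoff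
  have hcubic : ∀ n : ℕ, 1 ≤ n →
      (⨆ z ∈ Metric.sphere (0 : ℂ) r, logDerivAbs (fun k => Z k ω) n z) ≤
        ENNReal.ofReal (C ^ 2 * (n : ℝ) ^ 3) := fun n hn =>
    (iSup_logDerivAbs_sphere_le fun k _ => hoff k).trans <| ENNReal.ofReal_le_ofReal <| calc
      (∑ k ∈ range n, X k ω) ^ 2 ≤ (C * n) ^ 2 :=
        pow_le_pow_left₀ (sum_nonneg fun k _ => invSqrtDistSphere_nonneg r _) (hsum n) 2
      _ ≤ C ^ 2 * (n : ℝ) ^ 3 := by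
        rw [mul_pow]
        gcongr
        exacts [Nat.one_le_cast.2 hn, by norm_num]
  exact ⟨⟨_, hcubic⟩, exists_max_log_le_mul_log_of_le_ofReal_mul_pow 3 (one_le_pow₀ hC) hcubic⟩

/-- If `(Z_k)` are i.i.d. complex random variables and `r > 0` is such that
`E[|r - |Z_1||^{-1/2}] < ∞`, then almost surely `sup_{z ∈ C(0,r)} |S_n(z)| = O(n³)`;
in particular `log⁺ ‖S_n‖_{C(0,r)} = O(log n)`. -/
theorem as_cubic_bound_on_circle
    {Ω : Type*} [MeasurableSpace Ω] (Pr : Measure Ω) [IsProbabilityMeasure Pr]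
    (Z : ℕ → Ω → ℂ) (hmeas : ∀ k, Measurable (Z k))
    (hindep : iIndepFun Z Pr)
    (hident : ∀ k, Measure.map (Z k) Pr = Measure.map (Z 0) Pr)
    (r : ℝ) (hr : 0 < r)
    (hmom : ∫⁻ ω, (ENNReal.ofReal |r - ‖Z 0 ω‖|) ^ (-(2⁻¹ : ℝ)) ∂Pr < ⊤) :
    ∀ᵐ ω ∂Pr,
      (∃ C : ℝ, ∀ n : ℕ, 1 ≤ n →
        (⨆ z ∈ Metric.sphere (0 : ℂ) r, logDerivAbs (fun k => Z k ω) n z) ≤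
          ENNReal.ofReal (C * (n : ℝ) ^ 3)) ∧
      (∃ K : ℝ, ∀ n : ℕ, 2 ≤ n →
        (⨆ z ∈ Metric.sphere (0 : ℂ) r, logDerivAbs (fun k => Z k ω) n z) ≠ ⊤ ∧
        max (Real.log ((⨆ z ∈ Metric.sphere (0 : ℂ) r,
            logDerivAbs (fun k => Z k ω) n z).toReal)) 0 ≤ K * Real.log n) :=
  as_cubic_bound_on_circle_general Pr Z hmeas hindep hident r hmom
end

section
/- Let P be a nonconstant complex polynomial with multiset of roots 𝒵 and multiset of critical points 𝒞 (the roots of P′), both counted with multiplicity, and let S = P′/P. Let u(z) = (αz + β)/(γz + δ) be an invertible Möbius transformation (αδ − βγ ≠ 0), set a := u^{−1}(0) and C′ := u^{−1}(C), where C is the unit circle. If a is neither a zero nor a pole of S, then ∑_{ρ ∈ 𝒞} log^-|u(ρ)| − ∑_{ζ ∈ 𝒵} log^-|u(ζ)| ≤ log (sup_{z ∈ C′} |S(z)|) − log |S(a)|. -/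
open MeasureTheory Polynomial
open scoped ENNReal

/-- The negative part of the logarithm: `log⁻(x) = -log(x)` for `0 < x < 1`, `0` otherwise. -/
noncomputable def logNeg (x : ℝ) : ℝ := max (-Real.log x) 0

/-- The modulus of the logarithmic derivative `S = P'/P` of a polynomial `P`, with the
convention that `|S(z)| = +∞` at the poles of `S`, i.e. at the roots of `P`. -/
noncomputable def polyLogDerivAbs (P : Polynomial ℂ) (z : ℂ) : ℝ≥0∞ :=
  if P.eval z = 0 then ⊤ else (‖P.derivative.eval z / P.eval z‖₊ : ℝ≥0∞)

/-!
Substituting `z = u⁻¹(w) = (δw - β)/(α - γw)`, the polynomial `(α - γw)^(deg Q) · Q(u⁻¹ w)` is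
`lc Q · ∏_b ((γb + δ)w - (αb + β))` over the roots `b` of `Q`, and the Mahler measure of each linear
factor is `|αb + β| · exp (log⁻|u(b)|)`. On the unit circle `S(u⁻¹ w) = N(w)/D(w)`, where `D` is the
pullback of `P` and `N` is `γw - α` (the simple zero of `S` at `∞`) times the pullback of `P'`.
Comparing circle averages of `log` gives `M(N) ≤ ‖S‖_{C'} · M(D)`; at the centre `N(0)/D(0) = S(a)`,
and the extra factor `γw - α` only increases `M(N)`.
-/

open Filter Metric Real Set

theorem max_norm_eq_norm_mul_exp_logNeg (A : ℂ) {B : ℂ} (hB : B ≠ 0) :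
    max ‖A‖ ‖B‖ = ‖B‖ * exp (logNeg ‖B / A‖) := by
  rcases eq_or_ne A 0 with rfl | hA
  · simp [logNeg]
  have hpos : 0 < ‖B / A‖ := norm_pos_iff.mpr (div_ne_zero hB hA)
  rw [logNeg, Monotone.map_max exp_monotone, exp_neg, exp_log hpos, exp_zero,
    mul_max_of_nonneg _ _ (norm_nonneg B), norm_div, inv_div,
    mul_div_cancel₀ _ (norm_ne_zero_iff.mpr hB), mul_one]

theorem Complex.sphere_infinite (c : ℂ) {R : ℝ} (hR : 0 < R) : (sphere c R).Infinite := by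
  have hinj := injOn_circleMap_of_abs_sub_le' (c := c) hR.ne' (sub_zero (2 * π)).le
  refine ((Ico_infinite two_pi_pos).image hinj).mono ?_
  rintro _ ⟨θ, -, rfl⟩
  exact circleMap_mem_sphere c hR.le θ

theorem circleAverage_mono_of_eventually_le {c : ℂ} {R : ℝ} {f g : ℂ → ℝ}
    (hf : CircleIntegrable f c R) (hg : CircleIntegrable g c R) (hR : R ≠ 0)
    (h : f ≤ᶠ[codiscreteWithin (sphere c |R|)] g) :
    circleAverage f c R ≤ circleAverage g c R := by
  have hmin : f =ᶠ[codiscreteWithin (sphere c |R|)] fun x => min (f x) (g x) :=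
    h.mono fun x hx => (min_eq_left hx).symm
  rw [circleAverage_congr_codiscreteWithin hmin hR]
  exact circleAverage_mono (hf.congr_codiscreteWithin hmin) hg fun x _ => min_le_right _ _

theorem exists_mobius_eq {α β γ δ w : ℂ} (hdet : α * δ - β * γ ≠ 0) (hw : α - γ * w ≠ 0) :
    ∃ z, (α - γ * w) * z = δ * w - β ∧ γ * z + δ ≠ 0 ∧ (α * z + β) / (γ * z + δ) = w := by
  refine ⟨(δ * w - β) / (α - γ * w), mul_div_cancel₀ _ hw, ?_⟩
  have hden : γ * ((δ * w - β) / (α - γ * w)) + δ = (α * δ - β * γ) / (α - γ * w) := by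
    field_simp; ring
  refine ⟨hden ▸ div_ne_zero hdet hw, ?_⟩
  rw [div_eq_iff (hden ▸ div_ne_zero hdet hw), hden, mul_div_assoc', mul_div_assoc',
    div_add' _ _ _ hw, div_left_inj' hw]
  ring

theorem norm_derivative_eval_le_of_polyLogDerivAbs_le {P : ℂ[X]} {z : ℂ} {M : ℝ≥0∞}
    (hM : M ≠ ⊤) (h : polyLogDerivAbs P z ≤ M) : ‖P.derivative.eval z‖ ≤ M.toReal * ‖P.eval z‖ := by
  unfold polyLogDerivAbs at h
  split_ifs at h with hz
  · exact absurd (top_le_iff.mp h) hM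
  have := ENNReal.toReal_mono hM h
  rwa [ENNReal.coe_toReal, coe_nnnorm, norm_div, div_le_iff₀ (norm_pos_iff.mpr hz)] at this

theorem coe_le_log_sub_log_of_mul_exp_le {x s : ℝ} {M : ℝ≥0∞} (hs : 0 < s)
    (h : s * exp x ≤ M.toReal) : (x : EReal) ≤ ENNReal.log M - (log s : EReal) := by
  have hMpos : 0 < M.toReal := (mul_pos hs (exp_pos x)).trans_le h
  rw [ENNReal.log_pos_real' hMpos, ← EReal.coe_sub, EReal.coe_le_coe_iff]
  have := log_le_log (mul_pos hs (exp_pos x)) h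
  rw [log_mul hs.ne' (exp_ne_zero x), log_exp] at this
  linarith

namespace Polynomial

theorem mahlerMeasure_C_mul_X_sub_C (A B : ℂ) :
    (C A * X - C B).mahlerMeasure = max ‖A‖ ‖B‖ := by
  rcases eq_or_ne A 0 with rfl | hA
  · simp [← map_neg, mahlerMeasure_const]
  rw [sub_eq_add_neg, ← map_neg, mahlerMeasure_C_mul_X_add_C hA, norm_neg]

theorem mahlerMeasure_le_mul_of_norm_eval_le {p q : ℂ[X]} {m : ℝ} (hp : p ≠ 0)
    (h : ∀ w ∈ sphere (0 : ℂ) 1, ‖p.eval w‖ ≤ m * ‖q.eval w‖) :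
    p.mahlerMeasure ≤ m * q.mahlerMeasure := by
  obtain ⟨w₀, hw₀, hpw₀⟩ : ∃ w ∈ sphere (0 : ℂ) 1, p.eval w ≠ 0 := by
    by_contra! hzero
    exact hp (p.eq_zero_of_infinite_isRoot ((Complex.sphere_infinite 0 one_pos).mono hzero))
  have hqpos : 0 < m * ‖q.eval w₀‖ := (norm_pos_iff.mpr hpw₀).trans_le (h w₀ hw₀)
  have hm : 0 < m := pos_of_mul_pos_left hqpos (norm_nonneg _)
  have hq : q ≠ 0 := by rintro rfl; simp at hqpos
  have hlog : p.logMahlerMeasure ≤ log m + q.logMahlerMeasure := by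
    have hroots : (p.roots.toFinset : Set ℂ)ᶜ ∈ codiscreteWithin (sphere (0 : ℂ) |1|) :=
      codiscreteWithin_mono (subset_univ _) p.roots.toFinset.finite_toSet.compl_mem_codiscrete
    have hpi : CircleIntegrable (fun w => log ‖p.eval w‖) 0 1 :=
      p.intervalIntegrable_mahlerMeasure
    have hqi : CircleIntegrable (fun w => log ‖q.eval w‖) 0 1 :=
      q.intervalIntegrable_mahlerMeasure
    rw [logMahlerMeasure_def, logMahlerMeasure_def, ← circleAverage_const (log m) 0 1,
      ← circleAverage_add (circleIntegrable_const _ _ _) hqi]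
    refine circleAverage_mono_of_eventually_le hpi ((circleIntegrable_const _ _ _).add hqi)
      one_ne_zero ?_
    filter_upwards [hroots, self_mem_codiscreteWithin _] with w hroot hws
    have hw : p.eval w ≠ 0 := by simpa [hp] using hroot
    have hle := h w (by simpa using hws)
    have hqw : q.eval w ≠ 0 := fun hq0 => hw (by simpa [hq0] using hle)
    rw [Pi.add_apply, ← log_mul hm.ne' (norm_ne_zero_iff.mpr hqw)]
    exact log_le_log (norm_pos_iff.mpr hw) hle
  rw [mahlerMeasure_def_of_ne_zero hp, mahlerMeasure_def_of_ne_zero hq]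
  calc exp p.logMahlerMeasure ≤ exp (log m + q.logMahlerMeasure) := exp_le_exp.mpr hlog
    _ = m * exp q.logMahlerMeasure := by rw [exp_add, exp_log hm]

variable (α β γ δ : ℂ)

/-- `(α - γw)^(deg Q) · Q(u⁻¹ w)`, written through the roots of `Q`. A root with `γb + δ = 0`
gives a constant factor, and the junk value `(αb + β)/0 = 0` makes its `logNeg` term vanish. -/
noncomputable def mobiusPullback (Q : ℂ[X]) : ℂ[X] :=
  C Q.leadingCoeff * (Q.roots.map fun b => C (γ * b + δ) * X - C (α * b + β)).prod

variable {α β γ δ}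

theorem eval_mobiusPullback (Q : ℂ[X]) {w z : ℂ} (hz : (α - γ * w) * z = δ * w - β) :
    (mobiusPullback α β γ δ Q).eval w = (α - γ * w) ^ Q.natDegree * Q.eval z := by
  have hfactor : ∀ b, (C (γ * b + δ) * X - C (α * b + β)).eval w = (α - γ * w) * (z - b) := by
    intro b
    simp only [eval_sub, eval_mul, eval_C, eval_X]
    linear_combination -hz
  rw [(IsAlgClosed.splits Q).eval_eq_prod_roots, mobiusPullback, eval_mul, eval_C,
    eval_multiset_prod, Multiset.map_map, Function.comp_def]
  simp only [hfactor, Multiset.prod_map_mul, Multiset.map_const', Multiset.prod_replicate,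
    IsAlgClosed.card_roots_eq_natDegree]
  ring

theorem mahlerMeasure_mobiusPullback {Q : ℂ[X]} (hQ : ∀ b ∈ Q.roots, α * b + β ≠ 0) :
    (mobiusPullback α β γ δ Q).mahlerMeasure = ‖(mobiusPullback α β γ δ Q).eval 0‖ *
      exp (Q.roots.map fun b => logNeg ‖(α * b + β) / (γ * b + δ)‖).sum := by
  have hfactor : ∀ b ∈ Q.roots, (C (γ * b + δ) * X - C (α * b + β)).mahlerMeasure =
      ‖α * b + β‖ * exp (logNeg ‖(α * b + β) / (γ * b + δ)‖) := fun b hb => by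
    rw [mahlerMeasure_C_mul_X_sub_C, max_norm_eq_norm_mul_exp_logNeg _ (hQ b hb)]
  rw [mobiusPullback, mahlerMeasure_mul, mahlerMeasure_const,
    prod_mahlerMeasure_eq_mahlerMeasure_prod, Multiset.map_map, Function.comp_def,
    Multiset.map_congr rfl hfactor, Multiset.prod_map_mul, exp_multiset_sum, Multiset.map_map]
  have hnorm := map_multiset_prod (normHom : ℂ →*₀ ℝ)
  simp only [normHom_apply] at hnorm
  have hzero : ∀ b, (C (γ * b + δ) * X - C (α * b + β)).eval 0 = -(α * b + β) := by simp
  simp only [eval_mul, eval_C, eval_multiset_prod, Multiset.map_map, Function.comp_def, hzero,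
    norm_mul, hnorm, norm_neg, mul_assoc]

theorem mul_add_ne_zero_of_mem_roots {Q : ℂ[X]} {a b : ℂ} (hα : α ≠ 0) (ha : α * a + β = 0)
    (hQa : Q.eval a ≠ 0) (hb : b ∈ Q.roots) : α * b + β ≠ 0 := by
  intro hb0
  obtain rfl : b = a := mul_left_cancel₀ hα (by linear_combination hb0 - ha)
  exact hQa (mem_roots'.mp hb).2

theorem norm_eval_mobiusPullback_derivative {P : ℂ[X]} (hP : P.derivative ≠ 0) {w z : ℂ}
    (hz : (α - γ * w) * z = δ * w - β) :
    ‖((C γ * X - C α) * mobiusPullback α β γ δ P.derivative).eval w‖ =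
      ‖α - γ * w‖ ^ P.natDegree * ‖P.derivative.eval z‖ := by
  have hdeg : P.natDegree = P.derivative.natDegree + 1 := by
    have : P.natDegree ≠ 0 := fun h => hP (derivative_of_natDegree_zero h)
    rw [natDegree_derivative]; omega
  rw [eval_mul, eval_mobiusPullback _ hz, hdeg]
  simp only [eval_sub, eval_mul, eval_C, eval_X, norm_mul, norm_pow, pow_succ]
  rw [← norm_neg (γ * w - α), neg_sub]
  ring

theorem norm_eval_zero_mul_exp_le_mahlerMeasure {Q : ℂ[X]} (hQ : ∀ b ∈ Q.roots, α * b + β ≠ 0) :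
    ‖((C γ * X - C α) * mobiusPullback α β γ δ Q).eval 0‖ *
        exp (Q.roots.map fun b => logNeg ‖(α * b + β) / (γ * b + δ)‖).sum ≤
      ((C γ * X - C α) * mobiusPullback α β γ δ Q).mahlerMeasure := by
  rw [mahlerMeasure_mul, mahlerMeasure_C_mul_X_sub_C, mahlerMeasure_mobiusPullback hQ, eval_mul,
    norm_mul, mul_assoc]
  gcongr
  simp


theorem norm_eval_mobiusPullback_derivative_le {P : ℂ[X]} (hdet : α * δ - β * γ ≠ 0)
    (hP : P.derivative ≠ 0) {M : ℝ≥0∞} (hM : M ≠ ⊤)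
    (hS : ∀ z, γ * z + δ ≠ 0 → ‖(α * z + β) / (γ * z + δ)‖ = 1 → polyLogDerivAbs P z ≤ M)
    {w : ℂ} (hw : ‖w‖ = 1) :
    ‖((C γ * X - C α) * mobiusPullback α β γ δ P.derivative).eval w‖ ≤
      M.toReal * ‖(mobiusPullback α β γ δ P).eval w‖ := by
  rcases eq_or_ne (α - γ * w) 0 with hw0 | hw0
  · have hfactor : γ * w - α = 0 := by linear_combination -hw0
    simp only [eval_mul, eval_sub, eval_C, eval_X, hfactor, zero_mul, norm_zero]
    positivity
  obtain ⟨z, hz, hγz, huz⟩ := exists_mobius_eq hdet hw0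
  rw [norm_eval_mobiusPullback_derivative hP hz, eval_mobiusPullback P hz, norm_mul, norm_pow]
  calc ‖α - γ * w‖ ^ P.natDegree * ‖P.derivative.eval z‖
      ≤ ‖α - γ * w‖ ^ P.natDegree * (M.toReal * ‖P.eval z‖) := by
        gcongr
        exact norm_derivative_eval_le_of_polyLogDerivAbs_le hM (hS z hγz (by rw [huz, hw]))
    _ = M.toReal * (‖α - γ * w‖ ^ P.natDegree * ‖P.eval z‖) := by ring

theorem norm_logDeriv_mul_exp_le_of_mahlerMeasure_le {P : ℂ[X]} {a : ℂ} (hα : α ≠ 0)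
    (ha : α * a + β = 0) (haZ : P.eval a ≠ 0) (haC : P.derivative.eval a ≠ 0) {m : ℝ}
    (h : ((C γ * X - C α) * mobiusPullback α β γ δ P.derivative).mahlerMeasure ≤
      m * (mobiusPullback α β γ δ P).mahlerMeasure) :
    ‖P.derivative.eval a / P.eval a‖ *
        exp ((P.derivative.roots.map fun ρ => logNeg ‖(α * ρ + β) / (γ * ρ + δ)‖).sum -
          (P.roots.map fun ζ => logNeg ‖(α * ζ + β) / (γ * ζ + δ)‖).sum) ≤ m := by
  have hP : P.derivative ≠ 0 := fun h => haC (by simp [h])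
  have hza : (α - γ * 0) * a = δ * 0 - β := by linear_combination ha
  have hD0 : ‖(mobiusPullback α β γ δ P).eval 0‖ = ‖α‖ ^ P.natDegree * ‖P.eval a‖ := by
    rw [eval_mobiusPullback P hza, norm_mul, norm_pow, mul_zero, sub_zero]
  have hbound := (norm_eval_zero_mul_exp_le_mahlerMeasure
    fun _ => mul_add_ne_zero_of_mem_roots hα ha haC).trans h
  rw [mahlerMeasure_mobiusPullback fun _ => mul_add_ne_zero_of_mem_roots hα ha haZ,
    norm_eval_mobiusPullback_derivative hP hza, hD0, mul_zero, sub_zero] at hbound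
  rw [norm_div, exp_sub, div_mul_div_comm, div_le_iff₀ (by positivity)]
  refine le_of_mul_le_mul_left ?_ (by positivity : 0 < ‖α‖ ^ P.natDegree)
  linarith

end Polynomial

theorem jensen_mobius_inequality_general
    (P : Polynomial ℂ)
    (α β γ δ : ℂ) (hdet : α * δ - β * γ ≠ 0)
    (a : ℂ) (ha : α * a + β = 0)
    (haZ : P.eval a ≠ 0) (haC : P.derivative.eval a ≠ 0) :
    (((P.derivative.roots.map fun ρ =>
          logNeg (‖(α * ρ + β) / (γ * ρ + δ)‖)).sum -
        (P.roots.map fun ζ =>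
          logNeg (‖(α * ζ + β) / (γ * ζ + δ)‖)).sum : ℝ) : EReal) ≤
      ENNReal.log (⨆ z ∈ {w : ℂ | γ * w + δ ≠ 0 ∧
          ‖(α * w + β) / (γ * w + δ)‖ = 1}, polyLogDerivAbs P z) -
        ((Real.log (‖P.derivative.eval a / P.eval a‖) : ℝ) : EReal) := by
  have hα : α ≠ 0 := by
    rintro rfl
    obtain rfl : β = 0 := by simpa using ha
    simp at hdet
  have hP : P.derivative ≠ 0 := fun h => haC (by simp [h])
  have hza : (α - γ * 0) * a = δ * 0 - β := by linear_combination ha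
  have hN : (C γ * X - C α) * mobiusPullback α β γ δ P.derivative ≠ 0 := fun h => by
    simpa [h, hα, haC] using norm_eval_mobiusPullback_derivative hP hza
  set M := ⨆ z ∈ {w : ℂ | γ * w + δ ≠ 0 ∧ ‖(α * w + β) / (γ * w + δ)‖ = 1}, polyLogDerivAbs P z
  rcases eq_or_ne M ⊤ with hMtop | hMtop
  · simp [hMtop]
  refine coe_le_log_sub_log_of_mul_exp_le (norm_pos_iff.mpr (div_ne_zero haC haZ)) ?_
  refine norm_logDeriv_mul_exp_le_of_mahlerMeasure_le hα ha haZ haC ?_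
  refine mahlerMeasure_le_mul_of_norm_eval_le hN fun w hw => ?_
  exact norm_eval_mobiusPullback_derivative_le hdet hP hMtop
    (fun z hγz huz => le_biSup _ ⟨hγz, huz⟩) (by simpa using hw)

/-- **One-sided Jensen estimate for the logarithmic derivative.** Let `P` be a nonconstant
complex polynomial with roots `𝒵` and critical points `𝒞` (both with multiplicity), and let
`S = P'/P`. Let `u(z) = (αz+β)/(γz+δ)` be an invertible Möbius transformation, let
`a = u⁻¹(0)` and `C' = u⁻¹(C)` where `C` is the unit circle. If `a` is neither a zero nor a
pole of `S`, then
`∑_{ρ ∈ 𝒞} log⁻|u(ρ)| − ∑_{ζ ∈ 𝒵} log⁻|u(ζ)| ≤ log ‖S‖_{C'} − log |S(a)|`. -/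
theorem jensen_mobius_inequality
    (P : Polynomial ℂ) (hP : 0 < P.natDegree)
    (α β γ δ : ℂ) (hdet : α * δ - β * γ ≠ 0)
    (a : ℂ) (ha : α * a + β = 0)
    (haZ : P.eval a ≠ 0) (haC : P.derivative.eval a ≠ 0) :
    (((P.derivative.roots.map fun ρ =>
          logNeg (‖(α * ρ + β) / (γ * ρ + δ)‖)).sum -
        (P.roots.map fun ζ =>
          logNeg (‖(α * ζ + β) / (γ * ζ + δ)‖)).sum : ℝ) : EReal) ≤
      ENNReal.log (⨆ z ∈ {w : ℂ | γ * w + δ ≠ 0 ∧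
          ‖(α * w + β) / (γ * w + δ)‖ = 1}, polyLogDerivAbs P z) -
        ((Real.log (‖P.derivative.eval a / P.eval a‖) : ℝ) : EReal) :=
  jensen_mobius_inequality_general P α β γ δ hdet a ha haZ haC
end

section
/- Let f be a nonzero rational function (a quotient of two complex polynomials) such that 0 is neither a zero nor a pole of f and f has no zeros or poles on the unit circle C. Then ∑_ρ log^-|ρ| − ∑_ζ log^-|ζ| ≤ log ‖f‖_C − log |f(0)|, where ρ ranges over the zeros of f in the open unit disk and ζ over its poles in the open unit disk, each counted with multiplicity, and ‖f‖_C := sup_{|z|=1} |f(z)|. -/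
/-!
Dividing `p` and `q` by the finite Blaschke products `∏ (z - a) / (1 - conj a z)` of their zeros
in the open unit disk leaves `|p / q|` unchanged on the unit circle and leaves `q` without zeros
in the closed disk, so the new quotient is holomorphic there and the maximum modulus principle
bounds its value at `0` by `‖p / q‖_C`. At `0` each Blaschke factor has modulus `|a|`, which is
where the terms `log⁻ |a|` come from.
-/

open Polynomial ComplexConjugate Metric

lemma logNeg_of_lt_one {x : ℝ} (h0 : 0 ≤ x) (h1 : x < 1) : logNeg x = -Real.log x :=
  max_eq_left (neg_nonneg.mpr (Real.log_nonpos h0 h1.le))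

lemma logNeg_of_one_le {x : ℝ} (h1 : 1 ≤ x) : logNeg x = 0 :=
  max_eq_right (neg_nonpos.mpr (Real.log_nonneg h1))

lemma Multiset.sum_map_logNeg_norm (s : Multiset ℂ) :
    (s.map fun a => logNeg ‖a‖).sum =
      -((s.filter (‖·‖ < 1)).map fun a => Real.log ‖a‖).sum := by
  induction s using Multiset.induction_on with
  | empty => simp
  | cons a s ih =>
    by_cases ha : ‖a‖ < 1
    · rw [Multiset.filter_cons_of_pos (p := (‖·‖ < 1)) s ha, Multiset.map_cons,
        Multiset.sum_cons, Multiset.map_cons, Multiset.sum_cons, ih,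
        logNeg_of_lt_one (norm_nonneg a) ha]
      ring
    · rw [Multiset.filter_cons_of_neg (p := (‖·‖ < 1)) s ha, Multiset.map_cons,
        Multiset.sum_cons, ih, logNeg_of_one_le (not_lt.mp ha), zero_add]

lemma Complex.norm_one_sub_conj_mul_eq {z : ℂ} (hz : ‖z‖ = 1) (a : ℂ) :
    ‖1 - conj a * z‖ = ‖z - a‖ := by
  have hzz : z * conj z = 1 := by
    rw [Complex.mul_conj, Complex.normSq_eq_norm_sq, hz]; norm_num
  calc ‖1 - conj a * z‖ = ‖z * (conj z - conj a)‖ := by rw [mul_sub, hzz, mul_comm]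
    _ = ‖z - a‖ := by rw [norm_mul, hz, one_mul, ← map_sub, Complex.norm_conj]

namespace Polynomial

noncomputable def blaschkeDenom (s : Multiset ℂ) : ℂ[X] :=
  (s.map fun a => 1 - C (conj a) * X).prod

lemma eval_zero_blaschkeDenom (s : Multiset ℂ) : (blaschkeDenom s).eval 0 = 1 := by
  simp [blaschkeDenom, eval_multiset_prod]

lemma norm_eval_blaschkeDenom {z : ℂ} (hz : ‖z‖ = 1) (s : Multiset ℂ) :
    ‖(blaschkeDenom s).eval z‖ = ‖((s.map fun a => X - C a).prod).eval z‖ := by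
  induction s using Multiset.induction_on with
  | empty => simp [blaschkeDenom]
  | cons a s ih =>
    simp only [blaschkeDenom, Multiset.map_cons, Multiset.prod_cons, eval_mul, norm_mul] at ih ⊢
    rw [ih]
    simp [Complex.norm_one_sub_conj_mul_eq hz]

lemma eval_blaschkeDenom_ne_zero {s : Multiset ℂ} (hs : ∀ a ∈ s, ‖a‖ < 1) {z : ℂ}
    (hz : ‖z‖ ≤ 1) : (blaschkeDenom s).eval z ≠ 0 := by
  simp only [blaschkeDenom, eval_multiset_prod, Multiset.map_map, Function.comp_def,
    eval_sub, eval_one, eval_mul, eval_C, eval_X, ne_eq, Multiset.prod_eq_zero_iff,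
    Multiset.mem_map, not_exists, not_and]
  intro a ha h
  have : ‖conj a * z‖ < 1 := by
    rw [norm_mul, Complex.norm_conj]
    exact mul_lt_one_of_nonneg_of_lt_one_left (norm_nonneg a) (hs a ha) hz
  rw [← sub_eq_zero.mp h, norm_one] at this
  exact lt_irrefl 1 this

noncomputable def diskRoots (p : ℂ[X]) : Multiset ℂ := p.roots.filter (‖·‖ < 1)

noncomputable def diskFactor (p : ℂ[X]) : ℂ[X] := ((diskRoots p).map fun a => X - C a).prod

lemma diskFactor_dvd (p : ℂ[X]) : diskFactor p ∣ p :=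
  (Multiset.prod_dvd_prod_of_le (Multiset.map_le_map (Multiset.filter_le _ _))).trans
    p.prod_multiset_X_sub_C_dvd

lemma diskFactor_mul_divByMonic (p : ℂ[X]) : diskFactor p * (p /ₘ diskFactor p) = p := by
  have h := modByMonic_add_div p (diskFactor p)
  rwa [(modByMonic_eq_zero_iff_dvd (q := diskFactor p) (monic_multisetProd_X_sub_C _)).2
    (diskFactor_dvd p), zero_add] at h

lemma eval_divByMonic_diskFactor_ne_zero {p : ℂ[X]} (hp : p ≠ 0) {z : ℂ} (hz : ‖z‖ < 1) :
    (p /ₘ diskFactor p).eval z ≠ 0 := by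
  classical
  have hpr := diskFactor_mul_divByMonic p
  set r := p /ₘ diskFactor p
  have hr : r ≠ 0 := by rintro hr; rw [hr, mul_zero] at hpr; exact hp hpr.symm
  have hcount : p.roots.count z = (diskRoots p).count z + r.roots.count z := by
    conv_lhs => rw [← hpr]
    rw [roots_mul (hpr.symm ▸ hp), diskFactor, roots_multiset_prod_X_sub_C, Multiset.count_add]
  have hdisk : (diskRoots p).count z = p.roots.count z := by
    rw [diskRoots, Multiset.count_filter_of_pos (p := (‖·‖ < 1)) hz]
  intro hrz
  have : 0 < r.roots.count z := Multiset.count_pos.mpr ((mem_roots hr).mpr hrz)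
  omega

/-- `p` divided by the finite Blaschke product of its zeros in the open unit disk. -/
noncomputable def divDiskBlaschke (p : ℂ[X]) : ℂ[X] :=
  p /ₘ diskFactor p * blaschkeDenom (diskRoots p)

lemma eval_divDiskBlaschke_ne_zero {p : ℂ[X]} (hp : p ≠ 0) {z : ℂ} (hz : ‖z‖ < 1) :
    (divDiskBlaschke p).eval z ≠ 0 := by
  rw [divDiskBlaschke, eval_mul]
  exact mul_ne_zero (eval_divByMonic_diskFactor_ne_zero hp hz)
    (eval_blaschkeDenom_ne_zero (fun a ha => (Multiset.mem_filter.mp ha).2) hz.le)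

lemma norm_eval_divDiskBlaschke (p : ℂ[X]) {z : ℂ} (hz : ‖z‖ = 1) :
    ‖(divDiskBlaschke p).eval z‖ = ‖p.eval z‖ := by
  conv_rhs => rw [← diskFactor_mul_divByMonic p]
  rw [divDiskBlaschke, diskFactor, eval_mul, eval_mul, norm_mul, norm_mul,
    norm_eval_blaschkeDenom hz, mul_comm]

lemma eval_zero_eq_prod_mul_eval_zero_divDiskBlaschke (p : ℂ[X]) :
    p.eval 0 = ((diskRoots p).map Neg.neg).prod * (divDiskBlaschke p).eval 0 := by
  conv_lhs => rw [← diskFactor_mul_divByMonic p]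
  simp [divDiskBlaschke, diskFactor, eval_multiset_prod, eval_zero_blaschkeDenom]

lemma log_norm_eval_zero_divDiskBlaschke {p : ℂ[X]} (h0 : p.eval 0 ≠ 0) :
    Real.log ‖(divDiskBlaschke p).eval 0‖ =
      Real.log ‖p.eval 0‖ + (p.roots.map fun a => logNeg ‖a‖).sum := by
  have hp : p ≠ 0 := by rintro rfl; simp at h0
  have hzero : (0 : ℂ) ∉ diskRoots p :=
    fun h => h0 (isRoot_of_mem_roots (Multiset.mem_of_mem_filter h))
  have hlog_prod : Real.log ‖((diskRoots p).map Neg.neg).prod‖ =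
      ((diskRoots p).map fun a => Real.log ‖a‖).sum := by
    rw [← normHom_apply, map_multiset_prod, Multiset.map_map, Real.log_multiset_prod]
    · simp
    · simp only [Multiset.mem_map, Function.comp_apply, normHom_apply, norm_neg]
      rintro _ ⟨a, ha, rfl⟩
      exact norm_ne_zero_iff.mpr (ne_of_mem_of_not_mem ha hzero)
  rw [eval_zero_eq_prod_mul_eval_zero_divDiskBlaschke p, norm_mul,
    Real.log_mul (by simpa using hzero)
      (by simpa using eval_divDiskBlaschke_ne_zero hp (z := 0) (by simp)),
    hlog_prod, Multiset.sum_map_logNeg_norm, ← diskRoots]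
  ring

lemma diffContOnCl_eval_div {p q : ℂ[X]} {U : Set ℂ}
    (hq : ∀ z ∈ closure U, q.eval z ≠ 0) :
    DiffContOnCl ℂ (fun z => p.eval z / q.eval z) U :=
  (p.differentiable.differentiableOn.div q.differentiable.differentiableOn hq).diffContOnCl

end Polynomial

lemma IsCompact.le_biSup_of_continuousOn {α : Type*} [TopologicalSpace α] {K : Set α}
    (hK : IsCompact K) {f : α → ℝ} (hf : ContinuousOn f K) {x : α} (hx : x ∈ K) :
    f x ≤ ⨆ y ∈ K, f y :=
  le_ciSup₂ (κ := (· ∈ K)) ((hK.bddAbove_image hf).mono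
    (Set.iUnion_subset fun _ => Set.range_subset_iff.2 fun hy => Set.mem_image_of_mem f hy)) x hx

theorem Complex.norm_le_biSup_frontier {f g : ℂ → ℂ} {U : Set ℂ}
    (hU : Bornology.IsBounded U) (hg : DiffContOnCl ℂ g U) (hf : ContinuousOn f (frontier U))
    (hgf : ∀ z ∈ frontier U, ‖g z‖ ≤ ‖f z‖) {z : ℂ} (hz : z ∈ closure U) :
    ‖g z‖ ≤ ⨆ w ∈ frontier U, ‖f w‖ :=
  have hK : IsCompact (frontier U) :=
    isCompact_of_isClosed_isBounded isClosed_frontier (hU.closure.subset frontier_subset_closure)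
  Complex.norm_le_of_forall_mem_frontier_norm_le hU hg
    (fun w hw => (hgf w hw).trans (hK.le_biSup_of_continuousOn hf.norm hw)) hz

theorem jensen_one_sided_rational_general
    (p q : Polynomial ℂ)
    (h0z : p.eval 0 ≠ 0) (h0p : q.eval 0 ≠ 0)
    (hcirc : ∀ z : ℂ, ‖z‖ = 1 → p.eval z ≠ 0 ∧ q.eval z ≠ 0) :
    (p.roots.map fun ρ => logNeg ‖ρ‖).sum -
        (q.roots.map fun ζ => logNeg ‖ζ‖).sum ≤
      Real.log (⨆ z ∈ Metric.sphere (0 : ℂ) 1,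
          ‖p.eval z / q.eval z‖) -
        Real.log ‖p.eval 0 / q.eval 0‖ := by
  have hp : p ≠ 0 := by rintro rfl; simp at h0z
  have hq : q ≠ 0 := by rintro rfl; simp at h0p
  have hsphere : ∀ z ∈ frontier (ball (0 : ℂ) 1), ‖z‖ = 1 := by simp [frontier_ball]
  have hq_ne : ∀ z ∈ closure (ball (0 : ℂ) 1), (divDiskBlaschke q).eval z ≠ 0 := by
    intro z hz
    rcases (mem_closedBall_zero_iff.mp (closure_ball_subset_closedBall hz)).lt_or_eq with hz | hz
    · exact eval_divDiskBlaschke_ne_zero hq hz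
    · rw [← norm_ne_zero_iff, norm_eval_divDiskBlaschke q hz, norm_ne_zero_iff]
      exact (hcirc z hz).2
  have hmax : ‖(divDiskBlaschke p).eval 0 / (divDiskBlaschke q).eval 0‖ ≤
      ⨆ z ∈ sphere (0 : ℂ) 1, ‖p.eval z / q.eval z‖ := by
    rw [← frontier_ball (0 : ℂ) one_ne_zero]
    refine Complex.norm_le_biSup_frontier isBounded_ball (diffContOnCl_eval_div hq_ne)
      (p.continuous.continuousOn.div q.continuous.continuousOn
        fun z hz => (hcirc z (hsphere z hz)).2)
      (fun z hz => ?_) (subset_closure (mem_ball_self one_pos))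
    simp [norm_eval_divDiskBlaschke _ (hsphere z hz)]
  have hp0 := eval_divDiskBlaschke_ne_zero hp (z := 0) (by simp)
  have hq0 := eval_divDiskBlaschke_ne_zero hq (z := 0) (by simp)
  have hlog := Real.log_le_log (norm_pos_iff.mpr (div_ne_zero hp0 hq0)) hmax
  rw [norm_div, Real.log_div (norm_ne_zero_iff.mpr hp0) (norm_ne_zero_iff.mpr hq0),
    log_norm_eval_zero_divDiskBlaschke h0z, log_norm_eval_zero_divDiskBlaschke h0p] at hlog
  rw [norm_div, Real.log_div (norm_ne_zero_iff.mpr h0z) (norm_ne_zero_iff.mpr h0p)]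
  linarith

/-- **One-sided Jensen inequality on the unit disk for rational functions.**
Let `f = p/q` be a nonzero rational function (with `p, q` coprime polynomials) such that `0`
is neither a zero nor a pole of `f`, and `f` has no zeros or poles on the unit circle. Then
`∑_ρ log⁻|ρ| − ∑_ζ log⁻|ζ| ≤ log ‖f‖_C − log |f(0)|`, where `ρ` (resp. `ζ`) ranges over the
zeros (resp. poles) of `f` in the open unit disk, counted with multiplicity. (Recall that
`log⁻|w| = 0` whenever `|w| ≥ 1`, so the sums may equivalently range over all the roots of
`p` and `q`.) -/
theorem jensen_one_sided_rational
    (p q : Polynomial ℂ) (hp : p ≠ 0) (hq : q ≠ 0) (hcop : IsCoprime p q)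
    (h0z : p.eval 0 ≠ 0) (h0p : q.eval 0 ≠ 0)
    (hcirc : ∀ z : ℂ, ‖z‖ = 1 → p.eval z ≠ 0 ∧ q.eval z ≠ 0) :
    (p.roots.map fun ρ => logNeg ‖ρ‖).sum -
        (q.roots.map fun ζ => logNeg ‖ζ‖).sum ≤
      Real.log (⨆ z ∈ Metric.sphere (0 : ℂ) 1,
          ‖p.eval z / q.eval z‖) -
        Real.log ‖p.eval 0 / q.eval 0‖ :=
  jensen_one_sided_rational_general p q h0z h0p hcirc
end
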